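/- arXiv:2004.01446 — 5 statements merged into one kernel-verified Lean document; each statement's English description precedes it below -/
import Mathlib

section
/- Let Q₁, Q₂ be m × m upper triangular matrices over Z_2 with associated quadratic forms Q_i(x) = x Q_i xᵀ, and suppose the symplectic matrix B = (Q₁+Q₂) + (Q₁+Q₂)ᵀ has rank r over Z_2. Then for any c₁, c₂ ∈ {0,...,2^m−1}, the normalized inner product |⟨b₁, b₂⟩|/2^m of the ±1-modulated vectors b₁ (from Q₁(x)+L_{c₁}(x)) and b₂ (from Q₂(x)+L_{c₂}(x)) is at most 1/√(2^r), with equality attained for some choice of c₁, c₂. -/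
open Matrix

/-- The quadratic form `x ↦ x Q xᵀ` associated to a quadratic matrix `Q` over `Z_2`. -/
def qmf {m : ℕ} (Q : Matrix (Fin m) (Fin m) (ZMod 2)) (x : Fin m → ZMod 2) : ZMod 2 :=
  ∑ i, ∑ j, x i * Q i j * x j

/-- The (unnormalized) inner product of the ±1-modulated vectors of the Boolean
functions `x Q₁ xᵀ + v₁·xᵀ` and `x Q₂ xᵀ + v₂·xᵀ`. -/
def golayInner {m : ℕ} (Q₁ Q₂ : Matrix (Fin m) (Fin m) (ZMod 2))
    (v₁ v₂ : Fin m → ZMod 2) : ℤ :=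
  ∑ x : Fin m → ZMod 2,
    ((-1 : ℤ) ^ (qmf Q₁ x + ∑ r, v₁ r * x r).val)
      * ((-1 : ℤ) ^ (qmf Q₂ x + ∑ r, v₂ r * x r).val)

/-!
With `S(Q, v) = ∑ₓ (-1)^(x Q xᵀ + v ⬝ x)`, the inner product is `S(Q₁ + Q₂, v₁ + v₂)`.
Expanding `S²` and substituting `y = x + h` leaves, for each `h`, an orthogonality sum over `x`
that vanishes unless `h` lies in the radical `K = ker (Q + Qᵀ)` of the polar form, so
`S² = 2^m ∑_{h ∈ K} (-1)^(q(h) + v ⬝ h)`. On `K` the form `q` is additive, hence this character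
sum is `|K| = 2^(m-r)` when `q = v ⬝ ·` on `K` and `0` otherwise. Thus `S² ≤ 2^(2m-r)`, with
equality for any `v` extending the linear functional `q|_K`.
-/

namespace GolayInner

def signChar : AddChar (ZMod 2) ℤ where
  toFun a := (-1) ^ a.val
  map_zero_eq_one' := rfl
  map_add_eq_mul' := by decide

lemma signChar_injective : Function.Injective signChar := by decide

open scoped Classical in
lemma sum_signChar_comp {G : Type*} [AddGroup G] [Fintype G] (f : G →+ ZMod 2) :
    ∑ g, signChar (f g) = if f = 0 then (Fintype.card G : ℤ) else 0 := by
  have hf : signChar.compAddMonoidHom f = 0 ↔ f = 0 := by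
    rw [← AddChar.compAddMonoidHom_injective_right _ signChar_injective |>.eq_iff]
    rfl
  simpa [hf] using (signChar.compAddMonoidHom f).sum_eq_ite

lemma sum_signChar_dotProduct {ι : Type*} [Fintype ι] [DecidableEq ι] (w : ι → ZMod 2) :
    ∑ x : ι → ZMod 2, signChar (w ⬝ᵥ x) = if w = 0 then 2 ^ Fintype.card ι else 0 := by
  have hw : (dotProductEquiv (ZMod 2) ι w).toAddMonoidHom = 0 ↔ w = 0 := by
    rw [← (dotProductEquiv (ZMod 2) ι).map_eq_zero_iff, ← LinearMap.toAddMonoidHom_injective.eq_iff]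
    rfl
  simpa [hw] using sum_signChar_comp (dotProductEquiv (ZMod 2) ι w).toAddMonoidHom

variable {m : ℕ}

lemma add_qmf (Q₁ Q₂ : Matrix (Fin m) (Fin m) (ZMod 2)) (x : Fin m → ZMod 2) :
    qmf (Q₁ + Q₂) x = qmf Q₁ x + qmf Q₂ x := by
  simp only [qmf, Matrix.add_apply, mul_add, add_mul, Finset.sum_add_distrib]

lemma qmf_add (Q : Matrix (Fin m) (Fin m) (ZMod 2)) (x y : Fin m → ZMod 2) :
    qmf Q (x + y) = qmf Q x + qmf Q y + x ⬝ᵥ ((Q + Qᵀ) *ᵥ y) := by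
  have hswap : ∑ i, ∑ j, y i * Q i j * x j = ∑ i, ∑ j, x i * Qᵀ i j * y j := by
    rw [Finset.sum_comm]
    exact Finset.sum_congr rfl fun i _ => Finset.sum_congr rfl fun j _ => by
      rw [transpose_apply]; ring
  simp only [qmf, dotProduct, mulVec, Pi.add_apply, Matrix.add_apply, mul_add, add_mul,
    Finset.sum_add_distrib, Finset.mul_sum, ← mul_assoc, hswap]
  ring

def polarRadical (Q : Matrix (Fin m) (Fin m) (ZMod 2)) : Submodule (ZMod 2) (Fin m → ZMod 2) :=
  LinearMap.ker (Q + Qᵀ).mulVecLin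

lemma mem_polarRadical {Q : Matrix (Fin m) (Fin m) (ZMod 2)} {h : Fin m → ZMod 2} :
    h ∈ polarRadical Q ↔ (Q + Qᵀ) *ᵥ h = 0 :=
  Iff.rfl

lemma qmf_add_of_mem_polarRadical {Q : Matrix (Fin m) (Fin m) (ZMod 2)} (x : Fin m → ZMod 2)
    {h : Fin m → ZMod 2} (hh : h ∈ polarRadical Q) : qmf Q (x + h) = qmf Q x + qmf Q h := by
  rw [qmf_add, mem_polarRadical.mp hh, dotProduct_zero, add_zero]

def qmfOnRadical (Q : Matrix (Fin m) (Fin m) (ZMod 2)) : polarRadical Q →ₗ[ZMod 2] ZMod 2 :=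
  (AddMonoidHom.mk' (fun h : polarRadical Q => qmf Q h)
    fun x h => by rw [Submodule.coe_add, qmf_add_of_mem_polarRadical _ h.2]).toZModLinearMap 2

lemma card_polarRadical (Q : Matrix (Fin m) (Fin m) (ZMod 2)) :
    Nat.card (polarRadical Q) = 2 ^ (m - (Q + Qᵀ).rank) := by
  have hdim := LinearMap.finrank_range_add_finrank_ker (Q + Qᵀ).mulVecLin
  rw [Module.finrank_fin_fun] at hdim
  rw [Module.natCard_eq_pow_finrank (K := ZMod 2), Nat.card_zmod, polarRadical, rank]
  congr 1
  omega

lemma exists_dotProduct_eq_qmf (Q : Matrix (Fin m) (Fin m) (ZMod 2)) :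
    ∃ v : Fin m → ZMod 2, ∀ h ∈ polarRadical Q, v ⬝ᵥ h = qmf Q h := by
  obtain ⟨g, hg⟩ := (qmfOnRadical Q).exists_extend
  refine ⟨(dotProductEquiv (ZMod 2) (Fin m)).symm g, fun h hh => ?_⟩
  calc (dotProductEquiv (ZMod 2) (Fin m)).symm g ⬝ᵥ h
      = g h := by rw [← dotProductEquiv_apply_apply, LinearEquiv.apply_symm_apply]
    _ = qmf Q h := LinearMap.congr_fun hg ⟨h, hh⟩

def phase (Q : Matrix (Fin m) (Fin m) (ZMod 2)) (v x : Fin m → ZMod 2) : ZMod 2 :=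
  qmf Q x + v ⬝ᵥ x

def signSum (Q : Matrix (Fin m) (Fin m) (ZMod 2)) (v : Fin m → ZMod 2) : ℤ :=
  ∑ x, signChar (phase Q v x)

lemma golayInner_eq_signSum (Q₁ Q₂ : Matrix (Fin m) (Fin m) (ZMod 2)) (v₁ v₂ : Fin m → ZMod 2) :
    golayInner Q₁ Q₂ v₁ v₂ = signSum (Q₁ + Q₂) (v₁ + v₂) := by
  refine Finset.sum_congr rfl fun x _ => ?_
  change signChar _ * signChar _ = _
  rw [phase, add_qmf, add_dotProduct, ← signChar.map_add_eq_mul]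
  congr 1
  simp only [dotProduct]
  ring

lemma phase_add_phase_add (Q : Matrix (Fin m) (Fin m) (ZMod 2)) (v x h : Fin m → ZMod 2) :
    phase Q v x + phase Q v (x + h) = phase Q v h + ((Q + Qᵀ) *ᵥ h) ⬝ᵥ x := by
  have h2 : (2 : ZMod 2) = 0 := rfl
  rw [phase, phase, phase, qmf_add, dotProduct_add, dotProduct_comm x]
  linear_combination (qmf Q x + v ⬝ᵥ x) * h2

section

open scoped Classical

lemma sum_polarRadical_signChar (Q : Matrix (Fin m) (Fin m) (ZMod 2)) (v : Fin m → ZMod 2) :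
    ∑ h : polarRadical Q, signChar (phase Q v h) =
      if ∀ h ∈ polarRadical Q, v ⬝ᵥ h = qmf Q h then (Nat.card (polarRadical Q) : ℤ) else 0 := by
  let f : polarRadical Q →ₗ[ZMod 2] ZMod 2 :=
    qmfOnRadical Q + (dotProductEquiv (ZMod 2) (Fin m) v).domRestrict _
  have hf : f.toAddMonoidHom = 0 ↔ ∀ h ∈ polarRadical Q, v ⬝ᵥ h = qmf Q h := by
    simp only [DFunLike.ext_iff, Subtype.forall, AddMonoidHom.zero_apply]
    exact forall₂_congr fun h hh => CharTwo.add_eq_zero.trans eq_comm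
  rw [Nat.card_eq_fintype_card, ← if_congr hf rfl rfl]
  exact sum_signChar_comp f.toAddMonoidHom

lemma signSum_sq_eq_sum_polarRadical (Q : Matrix (Fin m) (Fin m) (ZMod 2))
    (v : Fin m → ZMod 2) :
    signSum Q v ^ 2 = 2 ^ m * ∑ h : polarRadical Q, signChar (phase Q v h) := by
  calc signSum Q v ^ 2
      = ∑ x, ∑ h, signChar (phase Q v x) * signChar (phase Q v (x + h)) := by
        rw [signSum, sq, Finset.sum_mul_sum]
        exact Finset.sum_congr rfl fun x _ =>
          (Fintype.sum_equiv (Equiv.addLeft x) _ _ fun h => rfl).symm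
    _ = ∑ h, signChar (phase Q v h) * ∑ x, signChar (((Q + Qᵀ) *ᵥ h) ⬝ᵥ x) := by
        rw [Finset.sum_comm]
        refine Finset.sum_congr rfl fun h _ => ?_
        rw [Finset.mul_sum]
        refine Finset.sum_congr rfl fun x _ => ?_
        rw [← AddChar.map_add_eq_mul, ← AddChar.map_add_eq_mul, phase_add_phase_add]
    _ = ∑ h ∈ Finset.univ.filter (· ∈ polarRadical Q), 2 ^ m * signChar (phase Q v h) := by
        rw [Finset.sum_filter]
        refine Finset.sum_congr rfl fun h _ => ?_
        rw [sum_signChar_dotProduct, Fintype.card_fin, mem_polarRadical]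
        split_ifs <;> ring
    _ = 2 ^ m * ∑ h : polarRadical Q, signChar (phase Q v h) := by
        rw [Finset.sum_subtype _ (p := (· ∈ polarRadical Q)) (by simp), Finset.mul_sum]

lemma signSum_sq (Q : Matrix (Fin m) (Fin m) (ZMod 2)) (v : Fin m → ZMod 2) :
    signSum Q v ^ 2 = if ∀ h ∈ polarRadical Q, v ⬝ᵥ h = qmf Q h
      then 2 ^ m * 2 ^ (m - (Q + Qᵀ).rank) else 0 := by
  rw [signSum_sq_eq_sum_polarRadical, sum_polarRadical_signChar, card_polarRadical]
  split_ifs <;> simp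

end

lemma one_div_sqrt_two_pow {m r : ℕ} (h : r ≤ m) :
    1 / √(2 ^ r : ℝ) = √(2 ^ m * 2 ^ (m - r)) / 2 ^ m := by
  have hsplit : (2 : ℝ) ^ m = 2 ^ (m - r) * 2 ^ r := by rw [← pow_add, Nat.sub_add_cancel h]
  have hr : 0 < √(2 ^ r : ℝ) := by positivity
  rw [div_eq_div_iff hr.ne' (by positivity), one_mul, ← Real.sqrt_mul (by positivity),
    mul_assoc, ← hsplit, Real.sqrt_mul_self (by positivity)]

end GolayInner

open GolayInner

theorem stmt7_general (m r : ℕ) (Q₁ Q₂ : Matrix (Fin m) (Fin m) (ZMod 2))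
    (hrank : ((Q₁ + Q₂) + (Q₁ + Q₂)ᵀ).rank = r) :
    (∀ v₁ v₂ : Fin m → ZMod 2,
        (|golayInner Q₁ Q₂ v₁ v₂| : ℝ) / 2 ^ m ≤ 1 / Real.sqrt (2 ^ r))
      ∧ (∃ v₁ v₂ : Fin m → ZMod 2,
        (|golayInner Q₁ Q₂ v₁ v₂| : ℝ) / 2 ^ m = 1 / Real.sqrt (2 ^ r)) := by
  classical
  have hsq (v₁ v₂ : Fin m → ZMod 2) : (golayInner Q₁ Q₂ v₁ v₂ : ℝ) ^ 2 =
      if ∀ h ∈ polarRadical (Q₁ + Q₂), (v₁ + v₂) ⬝ᵥ h = qmf (Q₁ + Q₂) h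
      then 2 ^ m * 2 ^ (m - r) else 0 := by
    rw [golayInner_eq_signSum, ← hrank]
    exact_mod_cast signSum_sq (Q₁ + Q₂) (v₁ + v₂)
  simp_rw [one_div_sqrt_two_pow (hrank ▸ rank_le_width _), ← Real.sqrt_sq_eq_abs]
  refine ⟨fun v₁ v₂ => ?_, ?_⟩
  · gcongr
    rw [hsq]
    split_ifs
    · rfl
    · positivity
  · obtain ⟨v, hv⟩ := exists_dotProduct_eq_qmf (Q₁ + Q₂)
    exact ⟨v, 0, by rw [hsq, add_zero, if_pos hv]⟩

/-- If the symplectic matrix `(Q₁+Q₂) + (Q₁+Q₂)ᵀ` of two upper triangular matrices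
has rank `r` over `Z_2`, then the normalized inner product of the corresponding
±1-modulated vectors is at most `1/√(2^r)` for all linear parts, with equality
attained for some choice. -/
theorem stmt7 (m r : ℕ) (Q₁ Q₂ : Matrix (Fin m) (Fin m) (ZMod 2))
    (hQ₁ : ∀ i j : Fin m, (j : ℕ) < (i : ℕ) → Q₁ i j = 0)
    (hQ₂ : ∀ i j : Fin m, (j : ℕ) < (i : ℕ) → Q₂ i j = 0)
    (hrank : ((Q₁ + Q₂) + (Q₁ + Q₂)ᵀ).rank = r) :
    (∀ v₁ v₂ : Fin m → ZMod 2,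
        (|golayInner Q₁ Q₂ v₁ v₂| : ℝ) / 2 ^ m ≤ 1 / Real.sqrt (2 ^ r))
      ∧ (∃ v₁ v₂ : Fin m → ZMod 2,
        (|golayInner Q₁ Q₂ v₁ v₂| : ℝ) / 2 ^ m = 1 / Real.sqrt (2 ^ r)) :=
  stmt7_general m r Q₁ Q₂ hrank
end

section
/- For a permutation π of {1,...,m}, the quadratic form Q_π(x) = Σ_{r=1}^{m−1} x_{π(r)} x_{π(r+1)} yields, for any choice of v ∈ Z_2^m and e ∈ Z_2, a Golay complementary sequence: the ±1 modulation b of the truth-table vector of f(x) = Q_π(x) + Σ_r v_r x_r + e satisfies that the sum of |Σ_{i=0}^{2^m−1} b_i z^i|² over the complementary pair is constant; in particular, the continuous PAPR of b, defined as max_{t∈[0,1)} |Σ_{i=0}^{2^m−1} b_i e^{j2πit}|² / 2^m, is at most 2. -/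
/-!
Write `z = e^{2πit}` and `i = Σ_k x_k 2^k`. Then `z^i = ∏_k (z^{2^k})^{x_k}`, so the sum over the
truth table becomes a sum over `x ∈ 𝔽₂^{m+1}` with unimodular weights `w_k = z^{2^k}`, and
relabelling the variables along `π` turns the quadratic form into the path `Σ_r y_r y_{r+1}`.
Let `S(c)` be the path sum with linear part `c · y`, and `S(c + δ₀)` that of its Golay partner
`f + y_0`. Splitting off the first vertex `y_0` gives `S(c) = α + s β` and `S(c + δ₀) = α - s β`
with `|s| = 1`, where `α, β` is the same pair for the path with one vertex fewer. The
parallelogram law then shows by induction that `|S(c)|² + |S(c + δ₀)|² = 2^{n+1}` on `n`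
vertices, whence `|S(c)|² ≤ 2 · 2^{m+1}`.
-/

/-- The `k`-th binary digit of `i`, as an element of `ZMod 2`. -/
def bitf (i k : ℕ) : ZMod 2 := if i.testBit k then 1 else 0

open Finset

lemma neg_one_pow_val_add {R : Type*} [Ring R] (a b : ZMod 2) :
    (-1 : R) ^ (a + b).val = (-1) ^ a.val * (-1) ^ b.val := by
  rw [ZMod.val_add, ← pow_add, ← neg_one_pow_eq_pow_mod_two]

lemma neg_one_pow_val_add_one {R : Type*} [Ring R] (a : ZMod 2) :
    (-1 : R) ^ (a + 1).val = -(-1) ^ a.val := by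
  rw [neg_one_pow_val_add, ZMod.val_one, pow_one, mul_neg_one]

lemma ZMod.sum_univ_two {M : Type*} [AddCommMonoid M] (f : ZMod 2 → M) :
    ∑ x, f x = f 0 + f 1 :=
  Fin.sum_univ_two f

lemma Fin.sum_univ_fun_succ {α M : Type*} [Fintype α] [AddCommMonoid M] {n : ℕ}
    (f : (Fin (n + 1) → α) → M) : ∑ y, f y = ∑ a, ∑ z : Fin n → α, f (Fin.cons a z) := by
  rw [← (Fin.consEquiv fun _ => α).sum_comp, Fintype.sum_prod_type]
  rfl

lemma norm_add_sq_add_norm_sub_sq_of_norm_eq_one {α β s : ℂ} (hs : ‖s‖ = 1) :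
    ‖α + s * β‖ ^ 2 + ‖α - s * β‖ ^ 2 = 2 * (‖α‖ ^ 2 + ‖β‖ ^ 2) := by
  rw [parallelogram_law_with_norm ℝ, norm_mul, hs, one_mul]

section PathSum

variable {n : ℕ}

def pathForm (y : Fin (n + 1) → ZMod 2) : ZMod 2 := ∑ r : Fin n, y r.castSucc * y r.succ

lemma pathForm_cons (a : ZMod 2) (y : Fin (n + 1) → ZMod 2) :
    pathForm (Fin.cons a y : Fin (n + 2) → ZMod 2) = a * y 0 + pathForm y := by
  simp [pathForm, Fin.sum_univ_succ]

def pathSum {R : Type*} [CommRing R] (w : Fin (n + 1) → R) (c : Fin (n + 1) → ZMod 2) : R :=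
  ∑ y : Fin (n + 1) → ZMod 2, (-1) ^ (pathForm y + ∑ r, c r * y r).val * ∏ r, w r ^ (y r).val

lemma pathSum_zero {R : Type*} [CommRing R] (w : Fin 1 → R) (c : Fin 1 → ZMod 2) :
    pathSum w c = 1 + (-1) ^ (c 0).val * w 0 := by
  rw [pathSum, ← (Equiv.funUnique (Fin 1) (ZMod 2)).symm.sum_comp, ZMod.sum_univ_two]
  simp [pathForm, ZMod.val_one]

lemma sum_add_single_zero_mul (c y : Fin (n + 1) → ZMod 2) :
    ∑ r, (c + Pi.single 0 1 : Fin (n + 1) → ZMod 2) r * y r = ∑ r, c r * y r + y 0 := by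
  simp [add_mul, sum_add_distrib, Pi.single_apply]

lemma pathSum_succ {R : Type*} [CommRing R] (w : Fin (n + 2) → R) (c : Fin (n + 2) → ZMod 2) :
    pathSum w c = pathSum (Fin.tail w) (Fin.tail c)
      + (-1) ^ (c 0).val * w 0 * pathSum (Fin.tail w) (Fin.tail c + Pi.single 0 1) := by
  rw [pathSum, Fin.sum_univ_fun_succ, ZMod.sum_univ_two, pathSum, pathSum, mul_sum]
  simp only [pathForm_cons, Fin.sum_univ_succ (n := n + 1), Fin.prod_univ_succ (n := n + 1),
    Fin.cons_zero, Fin.cons_succ, sum_add_single_zero_mul, Fin.tail_def]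
  congr 1
  · simp
  · refine sum_congr rfl fun y _ => ?_
    rw [show 1 * y 0 + pathForm y + (c 0 * 1 + ∑ r, c r.succ * y r)
        = pathForm y + (∑ r, c r.succ * y r + y 0) + c 0 by ring,
      neg_one_pow_val_add, ZMod.val_one]
    ring

lemma add_single_zero_apply_zero (c : Fin (n + 1) → ZMod 2) :
    (c + Pi.single 0 1 : Fin (n + 1) → ZMod 2) 0 = c 0 + 1 := by
  simp

lemma tail_add_single_zero (c : Fin (n + 2) → ZMod 2) :
    Fin.tail (c + Pi.single 0 1) = Fin.tail c := by
  ext r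
  simp [Fin.tail_def, Fin.succ_ne_zero]

lemma norm_neg_one_pow_mul {w : ℂ} (hw : ‖w‖ = 1) (k : ℕ) : ‖(-1) ^ k * w‖ = 1 := by
  simp [hw]

theorem pathSum_golay (w : Fin (n + 1) → ℂ) (hw : ∀ r, ‖w r‖ = 1) (c : Fin (n + 1) → ZMod 2) :
    ‖pathSum w c‖ ^ 2 + ‖pathSum w (c + Pi.single 0 1)‖ ^ 2 = 2 ^ (n + 2) := by
  induction n with
  | zero =>
    rw [pathSum_zero, pathSum_zero, add_single_zero_apply_zero, neg_one_pow_val_add_one, neg_mul,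
      ← sub_eq_add_neg]
    simpa [show (2 : ℝ) ^ 2 = 2 * (1 + 1) by norm_num] using
      norm_add_sq_add_norm_sub_sq_of_norm_eq_one (α := 1) (β := 1)
        (norm_neg_one_pow_mul (hw 0) (c 0).val)
  | succ n ih =>
    rw [pathSum_succ, pathSum_succ, add_single_zero_apply_zero, neg_one_pow_val_add_one,
      tail_add_single_zero, neg_mul, neg_mul, ← sub_eq_add_neg,
      norm_add_sq_add_norm_sub_sq_of_norm_eq_one (norm_neg_one_pow_mul (hw 0) _),
      ih (Fin.tail w) (fun r => hw r.succ)]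
    ring

end PathSum

section BinaryDigits

variable {n : ℕ}

-- `ZMod 2` is definitionally `Fin 2`, so `finFunctionFinEquiv.symm` has this type.
def binaryDigits (n : ℕ) : Fin (2 ^ n) ≃ (Fin n → ZMod 2) := finFunctionFinEquiv.symm

lemma binaryDigits_val (i : Fin (2 ^ n)) (k : Fin n) :
    (binaryDigits n i k).val = i / 2 ^ (k : ℕ) % 2 :=
  finFunctionFinEquiv_symm_apply_val i k

lemma bitf_eq_binaryDigits (i : Fin (2 ^ n)) (k : Fin n) : bitf i k = binaryDigits n i k := by
  apply ZMod.val_injective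
  rw [binaryDigits_val, bitf, Nat.testBit_eq_decide_div_mod_eq]
  rcases Nat.mod_two_eq_zero_or_one (i / 2 ^ (k : ℕ)) with h | h <;> simp [h, ZMod.val_one]

lemma val_eq_sum_binaryDigits (i : Fin (2 ^ n)) :
    (i : ℕ) = ∑ k, (binaryDigits n i k).val * 2 ^ (k : ℕ) := by
  conv_lhs => rw [← (binaryDigits n).symm_apply_apply i]
  exact finFunctionFinEquiv_apply _

lemma pow_eq_prod_binaryDigits {M : Type*} [CommMonoid M] (z : M) (i : Fin (2 ^ n)) :
    z ^ (i : ℕ) = ∏ k : Fin n, (z ^ 2 ^ (k : ℕ)) ^ (binaryDigits n i k).val := by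
  rw [val_eq_sum_binaryDigits i, ← prod_pow_eq_pow_sum]
  simp_rw [← pow_mul, mul_comm]

lemma sum_truthTable_eq {R : Type*} [CommRing R] (f : (Fin n → ZMod 2) → ZMod 2) (z : R) :
    ∑ i : Fin (2 ^ n), (-1 : R) ^ (f fun k => bitf i k).val * z ^ (i : ℕ)
      = ∑ x, (-1) ^ (f x).val * ∏ k : Fin n, (z ^ 2 ^ (k : ℕ)) ^ (x k).val := by
  rw [← (binaryDigits n).symm.sum_comp]
  simp [bitf_eq_binaryDigits, pow_eq_prod_binaryDigits]

lemma sum_perm_pathForm {R : Type*} [CommRing R] (π : Equiv.Perm (Fin (n + 1)))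
    (u : Fin (n + 1) → R) (v : Fin (n + 1) → ZMod 2) (e : ZMod 2) :
    ∑ x : Fin (n + 1) → ZMod 2,
        (-1 : R) ^ (∑ r : Fin n, x (π r.castSucc) * x (π r.succ) + ∑ k, v k * x k + e).val
          * ∏ k, u k ^ (x k).val
      = (-1) ^ e.val * pathSum (fun r => u (π r)) (fun r => v (π r)) := by
  rw [pathSum, mul_sum, ← (π.arrowCongr (Equiv.refl (ZMod 2))).sum_comp]
  refine sum_congr rfl fun y _ => ?_
  rw [← Equiv.sum_comp π, ← Equiv.prod_comp π]
  simp only [Equiv.arrowCongr_apply, Function.comp_apply, Equiv.symm_apply_apply,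
    Equiv.refl_apply, neg_one_pow_val_add, pathForm]
  ring

end BinaryDigits

lemma norm_exp_two_pi_mul_I_mul (t : ℝ) : ‖Complex.exp (2 * Real.pi * Complex.I * t)‖ = 1 := by
  rw [show 2 * Real.pi * Complex.I * t = ((2 * Real.pi * t : ℝ) : ℂ) * Complex.I by
    push_cast; ring]
  exact Complex.norm_exp_ofReal_mul_I _

/-- Golay–Davis–Jedwab: for any permutation `π` of `{1,...,m+1}`, any `v` and `e`,
the ±1 modulation of the truth table of
`f(x) = Σ_{r=1}^{m} x_{π(r)} x_{π(r+1)} + Σ_r v_r x_r + e` is a Golay complementary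
sequence of length `2^(m+1)`; in particular its continuous PAPR is at most `2`. -/
theorem stmt8 (m : ℕ) (π : Equiv.Perm (Fin (m + 1)))
    (v : Fin (m + 1) → ZMod 2) (e : ZMod 2) :
    ∀ t : ℝ, 0 ≤ t → t < 1 →
      ‖∑ i : Fin (2 ^ (m + 1)),
          ((-1 : ℂ) ^ ((∑ r : Fin m, bitf i.val (π r.castSucc).val * bitf i.val (π r.succ).val)
              + (∑ r : Fin (m + 1), v r * bitf i.val r.val) + e).val)
            * Complex.exp (2 * (Real.pi : ℂ) * Complex.I * (i.val : ℂ) * (t : ℂ))‖ ^ 2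
        / 2 ^ (m + 1) ≤ 2 := by
  intro t _ _
  set z := Complex.exp (2 * Real.pi * Complex.I * t)
  have hz : ‖z‖ = 1 := norm_exp_two_pi_mul_I_mul t
  have hexp (i : ℕ) : Complex.exp (2 * Real.pi * Complex.I * i * t) = z ^ i := by
    rw [← Complex.exp_nat_mul]
    ring_nf
  simp_rw [hexp]
  rw [sum_truthTable_eq
      (fun x => ∑ r : Fin m, x (π r.castSucc) * x (π r.succ) + ∑ r, v r * x r + e),
    sum_perm_pathForm, norm_mul, norm_pow, norm_neg, norm_one, one_pow, one_mul,
    div_le_iff₀ (by positivity), ← pow_succ']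
  have golay := pathSum_golay (fun r => z ^ 2 ^ (π r : ℕ)) (by simp [hz]) (fun r => v (π r))
  exact golay ▸ le_add_of_nonneg_right (sq_nonneg _)
end

section
/- A pair of ±1 sequences (b, b') of length M that are Golay complementary (i.e., the sum of their aperiodic autocorrelations vanishes at every nonzero shift) satisfies PAPR(b) ≤ 2, where PAPR(b) = max_{t∈[0,1)} |Σ_{i=0}^{M−1} b_i e^{2πjit}|² / M. -/
/-!
For `‖z‖ = 1`, expanding `|∑ bᵢ zⁱ|²` as a double sum and grouping the terms by lag `u = j - i`
gives `∑ bᵢ²` plus, for each `u ≥ 1`, the autocorrelation `apac M b u` times `zᵘ + z̄ᵘ`.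
For a Golay pair the lag terms of `b` and `b'` cancel and `bᵢ² = b'ᵢ² = 1`, so
`|∑ bᵢ zⁱ|² + |∑ b'ᵢ zⁱ|² = 2M`, and in particular `|∑ bᵢ zⁱ|² ≤ 2M` on the unit circle.
-/

/-- Aperiodic autocorrelation at shift `u` of a length-`M` sequence `b`. -/
def apac (M : ℕ) (b : ℕ → ℤ) (u : ℕ) : ℤ :=
  ∑ i ∈ Finset.range (M - u), b i * b (i + u)

open Finset ComplexConjugate

section LagSums

variable {R : Type*} [AddCommMonoid R]

theorem sum_range_sum_range_lt_eq_sum_lag (M : ℕ) (f : ℕ → ℕ → R) :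
    ∑ j ∈ range M, ∑ i ∈ range j, f i j = ∑ u ∈ Ico 1 M, ∑ i ∈ range (M - u), f i (i + u) := by
  rw [sum_sigma', sum_sigma']
  refine sum_nbij' (fun p => ⟨p.1 - p.2, p.2⟩) (fun p => ⟨p.2 + p.1, p.2⟩) ?_ ?_ ?_ ?_ ?_ <;>
    rintro ⟨a, c⟩ h <;> simp only [mem_sigma, mem_range, mem_Ico] at h ⊢
  · omega
  · omega
  · simp only [Sigma.mk.injEq, heq_eq_eq, and_true]; omega
  · simp only [Sigma.mk.injEq, heq_eq_eq, and_true]; omega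
  · congr 1; omega

theorem sum_range_sum_range_eq_diag_add_triangles (M : ℕ) (f : ℕ → ℕ → R) :
    ∑ i ∈ range M, ∑ j ∈ range M, f i j =
      ∑ i ∈ range M, f i i + ∑ j ∈ range M, ∑ i ∈ range j, f i j +
        ∑ i ∈ range M, ∑ j ∈ range i, f i j := by
  induction M with
  | zero => simp
  | succ n ih =>
    simp only [sum_range_succ, sum_add_distrib, ih]
    abel

theorem sum_range_sum_range_eq_diag_add_lag (M : ℕ) (f : ℕ → ℕ → R) :
    ∑ i ∈ range M, ∑ j ∈ range M, f i j =
      ∑ i ∈ range M, f i i + ∑ u ∈ Ico 1 M, ∑ i ∈ range (M - u), (f i (i + u) + f (i + u) i) := by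
  rw [sum_range_sum_range_eq_diag_add_triangles, add_assoc,
    sum_range_sum_range_lt_eq_sum_lag, sum_range_sum_range_lt_eq_sum_lag M (fun i j => f j i)]
  simp only [sum_add_distrib]

end LagSums

theorem mul_conj_sum_mul_pow_eq (M : ℕ) (b : ℕ → ℤ) {z : ℂ} (hz : ‖z‖ = 1) :
    (∑ i ∈ range M, (b i : ℂ) * z ^ i) * conj (∑ i ∈ range M, (b i : ℂ) * z ^ i) =
      ∑ i ∈ range M, (b i : ℂ) ^ 2 + ∑ u ∈ Ico 1 M, (apac M b u : ℂ) * (z ^ u + conj z ^ u) := by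
  have hzz : ∀ n : ℕ, z ^ n * conj z ^ n = 1 := fun n => by
    rw [← mul_pow, Complex.mul_conj, Complex.normSq_eq_norm_sq, hz]; simp
  rw [map_sum, sum_mul_sum, sum_range_sum_range_eq_diag_add_lag]
  simp only [map_mul, map_pow, map_intCast, apac, Int.cast_sum, Int.cast_mul, sum_mul]
  congr 1
  · refine sum_congr rfl fun i _ => ?_
    linear_combination (b i : ℂ) ^ 2 * hzz i
  · refine sum_congr rfl fun u _ => sum_congr rfl fun i _ => ?_
    rw [pow_add, pow_add]
    linear_combination (b i * b (i + u) * (z ^ u + conj z ^ u) : ℂ) * hzz i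

theorem sum_range_sq_eq_of_eq_one_or_eq_neg_one {M : ℕ} {c : ℕ → ℤ}
    (hc : ∀ i < M, c i = 1 ∨ c i = -1) : ∑ i ∈ range M, (c i : ℂ) ^ 2 = M := by
  rw [← nsmul_one, ← card_range M, ← sum_const, card_range]
  refine sum_congr rfl fun i hi => ?_
  rcases hc i (mem_range.mp hi) with h | h <;> simp [h]

structure IsGolayPair (M : ℕ) (b b' : ℕ → ℤ) : Prop where
  left_eq_one_or_eq_neg_one : ∀ i < M, b i = 1 ∨ b i = -1
  right_eq_one_or_eq_neg_one : ∀ i < M, b' i = 1 ∨ b' i = -1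
  apac_add_apac_eq_zero : ∀ u, 1 ≤ u → u ≤ M - 1 → apac M b u + apac M b' u = 0

theorem IsGolayPair.normSq_add_normSq {M : ℕ} {b b' : ℕ → ℤ} (h : IsGolayPair M b b')
    {z : ℂ} (hz : ‖z‖ = 1) :
    Complex.normSq (∑ i ∈ range M, (b i : ℂ) * z ^ i) +
      Complex.normSq (∑ i ∈ range M, (b' i : ℂ) * z ^ i) = 2 * M := by
  have hlag : ∑ u ∈ Ico 1 M, (apac M b u : ℂ) * (z ^ u + conj z ^ u) +
      ∑ u ∈ Ico 1 M, (apac M b' u : ℂ) * (z ^ u + conj z ^ u) = 0 := by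
    rw [← sum_add_distrib]
    refine sum_eq_zero fun u hu => ?_
    obtain ⟨hu1, huM⟩ := mem_Ico.mp hu
    rw [← add_mul, ← Int.cast_add, h.apac_add_apac_eq_zero u hu1 (by omega), Int.cast_zero,
      zero_mul]
  apply Complex.ofReal_injective
  push_cast
  rw [← Complex.mul_conj, ← Complex.mul_conj, mul_conj_sum_mul_pow_eq M b hz,
    mul_conj_sum_mul_pow_eq M b' hz,
    sum_range_sq_eq_of_eq_one_or_eq_neg_one h.left_eq_one_or_eq_neg_one,
    sum_range_sq_eq_of_eq_one_or_eq_neg_one h.right_eq_one_or_eq_neg_one]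
  linear_combination hlag

theorem IsGolayPair.normSq_le {M : ℕ} {b b' : ℕ → ℤ} (h : IsGolayPair M b b')
    {z : ℂ} (hz : ‖z‖ = 1) : Complex.normSq (∑ i ∈ range M, (b i : ℂ) * z ^ i) ≤ 2 * M := by
  linarith [h.normSq_add_normSq hz, Complex.normSq_nonneg (∑ i ∈ range M, (b' i : ℂ) * z ^ i)]

theorem stmt9_general (M : ℕ) (b b' : ℕ → ℤ)
    (hb : ∀ i < M, b i = 1 ∨ b i = -1) (hb' : ∀ i < M, b' i = 1 ∨ b' i = -1)
    (hcomp : ∀ u, 1 ≤ u → u ≤ M - 1 → apac M b u + apac M b' u = 0) :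
    ∀ t : ℝ, 0 ≤ t → t < 1 →
      ‖∑ i ∈ Finset.range M,
          (b i : ℂ) * Complex.exp (2 * (Real.pi : ℂ) * Complex.I * (i : ℂ) * (t : ℂ))‖ ^ 2
        / M ≤ 2 := by
  intro t _ _
  set z := Complex.exp (2 * (Real.pi : ℂ) * Complex.I * (t : ℂ))
  have hz : ‖z‖ = 1 := by
    simpa [z, mul_comm, mul_left_comm] using Complex.norm_exp_ofReal_mul_I (2 * Real.pi * t)
  have hpow : ∀ i : ℕ, Complex.exp (2 * (Real.pi : ℂ) * Complex.I * (i : ℂ) * (t : ℂ)) = z ^ i :=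
    fun i => by rw [← Complex.exp_nat_mul]; ring_nf
  simp only [hpow]
  refine div_le_of_le_mul₀ M.cast_nonneg zero_le_two ?_
  rw [Complex.sq_norm]
  exact (IsGolayPair.mk hb hb' hcomp).normSq_le hz

/-- A Golay complementary pair of ±1 sequences of length `M` satisfies
`PAPR(b) ≤ 2`. -/
theorem stmt9 (M : ℕ) (hM : 0 < M) (b b' : ℕ → ℤ)
    (hb : ∀ i < M, b i = 1 ∨ b i = -1) (hb' : ∀ i < M, b' i = 1 ∨ b' i = -1)
    (hcomp : ∀ u, 1 ≤ u → u ≤ M - 1 → apac M b u + apac M b' u = 0) :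
    ∀ t : ℝ, 0 ≤ t → t < 1 →
      ‖∑ i ∈ Finset.range M,
          (b i : ℂ) * Complex.exp (2 * (Real.pi : ℂ) * Complex.I * (i : ℂ) * (t : ℂ))‖ ^ 2
        / M ≤ 2 :=
  stmt9_general M b b' hb hb' hcomp
end

section
/- If every K-sparse vector is uniquely determined by its measurements y = Φx, equivalently if 2K < spark(Φ), and μ(Φ) is the coherence of unit-norm-column Φ, then any K with K < (1 + 1/μ(Φ))/2 guarantees unique recovery of every K-sparse signal from Φx. -/
/-!
If `Φ h = 0` with `h` supported on `S`, then the Gram submatrix `(Φᴴ Φ)_S` kills `h|_S`. That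
submatrix has unit diagonal and off-diagonal entries of norm at most `μ`, so when
`(#S - 1) μ < 1` it is strictly diagonally dominant, hence invertible by Gershgorin, and
`h = 0`. For `K`-sparse `x, x'` the support of `x - x'` has at most `2K` elements, and
`2K < 1 + 1/μ` is exactly `(2K - 1) μ < 1`.
-/

open Finset Matrix

theorem Matrix.det_ne_zero_of_diag_eq_one_of_norm_offDiag_le {K ι : Type*} [NormedField K]
    [Fintype ι] [DecidableEq ι] {A : Matrix ι ι K} {μ : ℝ} (hdiag : ∀ i, A i i = 1)
    (hoff : ∀ i j, i ≠ j → ‖A i j‖ ≤ μ) (hcard : ((Fintype.card ι : ℝ) - 1) * μ < 1) :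
    A.det ≠ 0 := by
  refine det_ne_zero_of_sum_row_lt_diag fun i => ?_
  calc ∑ j ∈ univ.erase i, ‖A i j‖ ≤ ∑ _j ∈ univ.erase i, μ :=
        sum_le_sum fun j hj => hoff i j (ne_of_mem_erase hj).symm
    _ = ((Fintype.card ι : ℝ) - 1) * μ := by
        rw [sum_const, card_erase_of_mem (mem_univ i), nsmul_eq_mul, card_univ,
          Nat.cast_pred (Fintype.card_pos_iff.mpr ⟨i⟩)]
    _ < ‖A i i‖ := by rwa [hdiag, norm_one]

theorem Matrix.mulVec_eq_submatrix_mulVec_of_support_subset {R m n : Type*} [Semiring R]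
    [Fintype n] (A : Matrix m n R) {h : n → R} {S : Finset n} (hS : ∀ j, h j ≠ 0 → j ∈ S) :
    A *ᵥ h = A.submatrix id ((↑) : S → n) *ᵥ fun j => h j := by
  ext i
  simp only [mulVec, dotProduct, submatrix_apply, id]
  rw [sum_coe_sort S (fun j => A i j * h j)]
  exact (sum_subset (subset_univ S) fun j _ hj => by
    rw [not_imp_comm.mp (hS j) hj, mul_zero]).symm

theorem Matrix.conjTranspose_mul_self_apply_self {𝕜 m n : Type*} [RCLike 𝕜] [Fintype m]
    (A : Matrix m n 𝕜) (j : n) : (Aᴴ * A) j j = ((∑ i, ‖A i j‖ ^ 2 : ℝ) : 𝕜) := by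
  simp [mul_apply, RCLike.conj_mul]

theorem card_filter_sub_ne_zero_le {ι R : Type*} [Fintype ι] [DecidableEq ι] [AddGroup R]
    [DecidableEq R] (x y : ι → R) :
    #{j | x j - y j ≠ 0} ≤ #{j | x j ≠ 0} + #{j | y j ≠ 0} := by
  refine (card_le_card fun j => ?_).trans (card_union_le _ _)
  simp only [mem_filter, mem_union, mem_univ, true_and]
  contrapose!
  rintro ⟨hx, hy⟩
  rw [hx, hy, sub_zero]

section
variable {𝕜 m n : Type*} [RCLike 𝕜] [Fintype m] [Fintype n] [DecidableEq n]

theorem Matrix.eq_zero_of_mulVec_eq_zero_of_card_support_lt {Φ : Matrix m n 𝕜} {μ : ℝ}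
    (hdiag : ∀ j, (Φᴴ * Φ) j j = 1) (hoff : ∀ j l, j ≠ l → ‖(Φᴴ * Φ) j l‖ ≤ μ)
    {h : n → 𝕜} (hΦh : Φ *ᵥ h = 0) (hcard : ((#{j | h j ≠ 0} : ℝ) - 1) * μ < 1) : h = 0 := by
  set S : Finset n := {j | h j ≠ 0}
  have hS : ∀ j, h j ≠ 0 → j ∈ S := fun j hj => mem_filter.mpr ⟨mem_univ j, hj⟩
  set ΦS := Φ.submatrix id ((↑) : S → n)
  have hgram : ΦSᴴ * ΦS = (Φᴴ * Φ).submatrix (↑) (↑) := by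
    rw [conjTranspose_submatrix, submatrix_mul _ _ _ id _ Function.bijective_id]
  have hdet : (ΦSᴴ * ΦS).det ≠ 0 := by
    rw [hgram]
    refine det_ne_zero_of_diag_eq_one_of_norm_offDiag_le (fun j => hdiag j)
      (fun j l hjl => hoff j l (Subtype.coe_ne_coe.mpr hjl)) ?_
    rwa [Fintype.card_coe]
  have hrestrict : (fun j : S => h j) = 0 := by
    refine eq_zero_of_mulVec_eq_zero hdet ?_
    rw [← mulVec_mulVec, ← mulVec_eq_submatrix_mulVec_of_support_subset Φ hS, hΦh, mulVec_zero]
  funext j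
  by_contra hj
  exact hj (congrFun hrestrict ⟨j, hS j hj⟩)

end

/-- If `Φ` has unit-norm columns with coherence at most `μ > 0`, then any sparsity
level `K` with `K < (1 + 1/μ)/2` guarantees unique recovery of every `K`-sparse
signal from `Φx`. -/
theorem stmt14 (M N K : ℕ) (Φ : Matrix (Fin M) (Fin N) ℂ)
    (hnorm : ∀ j, ∑ i, ‖Φ i j‖ ^ 2 = 1)
    (μ : ℝ) (hμ : 0 < μ)
    (hcoh : ∀ j₁ j₂, j₁ ≠ j₂ →
      ‖∑ i, (starRingEnd ℂ) (Φ i j₁) * Φ i j₂‖ ≤ μ)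
    (hK : (K : ℝ) < (1 + 1 / μ) / 2) :
    ∀ x x' : Fin N → ℂ,
      (Finset.univ.filter (fun j => x j ≠ 0)).card ≤ K →
      (Finset.univ.filter (fun j => x' j ≠ 0)).card ≤ K →
      Φ.mulVec x = Φ.mulVec x' → x = x' := by
  intro x x' hx hx' heq
  have hdiag : ∀ j, (Φᴴ * Φ) j j = 1 := fun j => by
    rw [conjTranspose_mul_self_apply_self, hnorm, RCLike.ofReal_one]
  have hsupp : (#{j | x j - x' j ≠ 0} : ℝ) ≤ 2 * K := by
    exact_mod_cast (card_filter_sub_ne_zero_le x x').trans (by omega)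
  have hspark : (2 * (K : ℝ) - 1) * μ < 1 := by
    rw [lt_div_iff₀ two_pos, ← sub_lt_iff_lt_add', lt_div_iff₀ hμ] at hK
    linarith
  rw [← sub_eq_zero]
  refine eq_zero_of_mulVec_eq_zero_of_card_support_lt hdiag hcoh
    (by rw [mulVec_sub, heq, sub_self]) ?_
  calc ((#{j | x j - x' j ≠ 0} : ℝ) - 1) * μ ≤ (2 * K - 1) * μ := by gcongr
    _ < 1 := hspark
end

section
/- Every x ∈ C^N that is K-sparse is uniquely determined among K-sparse vectors by y = Φx if and only if K < spark(Φ)/2. -/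
/-!
If `f x = f x'` for two `K`-sparse vectors, then `x - x'` is a kernel vector with at most `2K`
nonzero entries; conversely, a nonzero kernel vector `z` with at most `2K` nonzero entries splits
as `z = u - v` with `u`, `v` both `K`-sparse, and then `f u = f v` with `u ≠ v`.
-/

open Finset

variable {ι G H : Type*} [Fintype ι] [DecidableEq G]

/-- `‖x‖₀`. -/
def l0Norm [Zero G] (x : ι → G) : ℕ := #{j | x j ≠ 0}

lemma l0Norm_sub_le [AddGroup G] (x y : ι → G) : l0Norm (x - y) ≤ l0Norm x + l0Norm y := by
  classical
  refine (card_le_card fun j => ?_).trans (card_union_le _ _)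
  simp only [mem_filter, mem_univ, true_and, mem_union, Pi.sub_apply]
  contrapose!
  rintro ⟨hx, hy⟩
  rw [hx, hy, sub_self]

lemma exists_eq_sub_of_l0Norm_le [AddCommGroup G] {x : ι → G} {a b : ℕ}
    (hx : l0Norm x ≤ a + b) : ∃ u v : ι → G, l0Norm u ≤ a ∧ l0Norm v ≤ b ∧ x = u - v := by
  classical
  unfold l0Norm at hx ⊢
  obtain ⟨T, hTs, hT⟩ := exists_subset_card_eq (min_le_right a #{j | x j ≠ 0})
  set u : ι → G := fun j => if j ∈ T then x j else 0
  refine ⟨u, u - x, ?_, ?_, (sub_sub_cancel u x).symm⟩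
  · refine (card_le_card fun j => ?_).trans (hT ▸ min_le_left a _)
    by_cases hj : j ∈ T <;> simp [u, hj]
  · have hsT : #((univ.filter fun j => x j ≠ 0) \ T) ≤ b := by
      rw [card_sdiff_of_subset hTs, hT]
      omega
    refine (card_le_card fun j => ?_).trans hsT
    by_cases hj : j ∈ T <;> simp [u, hj]

theorem injOn_sparse_iff [AddCommGroup G] [AddGroup H] (f : (ι → G) →+ H) (K : ℕ) :
    Set.InjOn f {x | l0Norm x ≤ K} ↔ ∀ z, z ≠ 0 → f z = 0 → 2 * K < l0Norm z := by
  constructor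
  · intro hinj z hz hfz
    by_contra! hle
    obtain ⟨u, v, hu, hv, rfl⟩ := exists_eq_sub_of_l0Norm_le (hle.trans (two_mul K).le)
    rw [map_sub, sub_eq_zero] at hfz
    exact hz (sub_eq_zero.mpr (hinj hu hv hfz))
  · intro hker x hx x' hx' hxx'
    by_contra hne
    have := hker (x - x') (sub_ne_zero.mpr hne) (by rw [map_sub, hxx', sub_self])
    have := l0Norm_sub_le x x'
    simp only [Set.mem_ofPred_eq] at hx hx'
    omega

/-- For a matrix, the least number of linearly dependent columns; `⊤` (as `sInf ∅`) when `f` is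
injective. -/
noncomputable def spark [AddGroup G] [AddGroup H] (f : (ι → G) →+ H) : ℕ∞ :=
  sInf {n : ℕ∞ | ∃ x : ι → G, x ≠ 0 ∧ f x = 0 ∧ (l0Norm x : ℕ∞) = n}

theorem natCast_lt_spark_iff [AddGroup G] [AddGroup H] (f : (ι → G) →+ H) (n : ℕ) :
    (n : ℕ∞) < spark f ↔ ∀ z, z ≠ 0 → f z = 0 → n < l0Norm z := by
  simp only [spark, ← ENat.natCast_add_one_le_iff, le_sInf_iff, Set.mem_ofPred_eq,
    forall_exists_index, and_imp]
  exact ⟨fun h z hz hfz => by exact_mod_cast ENat.natCast_add_one_le_iff.mp (h _ z hz hfz rfl),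
    fun h _ z hz hfz hn => hn ▸ ENat.natCast_add_one_le_iff.mpr (by exact_mod_cast h z hz hfz)⟩

/-- Every `K`-sparse vector `x ∈ ℂ^N` is uniquely determined among `K`-sparse
vectors by `y = Φx` if and only if `2K < spark(Φ)`, where `spark(Φ)` is the
smallest `ℓ₀`-norm of a nonzero vector in the kernel of `Φ` (equivalently the
smallest cardinality of a linearly dependent set of columns), taken in `ℕ∞`. -/
theorem stmt15 (M N K : ℕ) (Φ : Matrix (Fin M) (Fin N) ℂ) :
    (∀ x x' : Fin N → ℂ,
        (Finset.univ.filter (fun j => x j ≠ 0)).card ≤ K →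
        (Finset.univ.filter (fun j => x' j ≠ 0)).card ≤ K →
        Φ.mulVec x = Φ.mulVec x' → x = x')
      ↔ (2 * K : ℕ∞) < sInf {n : ℕ∞ | ∃ x : Fin N → ℂ, x ≠ 0 ∧ Φ.mulVec x = 0 ∧
          ((Finset.univ.filter (fun j => x j ≠ 0)).card : ℕ∞) = n} := by
  have key := (injOn_sparse_iff Φ.mulVecLin.toAddMonoidHom K).trans
    (natCast_lt_spark_iff Φ.mulVecLin.toAddMonoidHom (2 * K)).symm
  push_cast at key
  exact ⟨fun h => key.mp fun x hx x' hx' => h x x' hx hx', fun h x x' hx hx' => key.mpr h hx hx'⟩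
end
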